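/- For the n-cycle C_n (n ≥ 3) with constant threshold 2, the minimum size of a target set activating all of C_n equals ⌈n/2⌉. -/

import Mathlib

/-!
Every vertex outside a seed set needs both of its neighbours to be active first, so two
adjacent non-seed vertices wait for each other forever: a seed set activating `C_n` must be
a vertex cover, hence has at least `n / 2` elements. Conversely the vertices `0, 2, 4, …`
form such a cover of size `⌈n/2⌉`, and every remaining vertex is activated in one step.
-/

/-- Activation closure: `v` eventually becomes active when starting from seed set `S`
in graph `G` with thresholds `θ` (a vertex activates once at least `θ v` of its
neighbors are active). -/
inductive Activated {V : Type*} (G : SimpleGraph V) (θ : V → ℕ) (S : Set V) : V → Prop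
  | base {v : V} : v ∈ S → Activated G θ S v
  | step {v : V} (T : Finset V) (hadj : ∀ u ∈ T, G.Adj u v) (hcard : θ v ≤ T.card)
      (hact : ∀ u ∈ T, Activated G θ S u) : Activated G θ S v

/-- Minimum size of a target set whose activation closure is all of `V`. -/
noncomputable def minSeed {V : Type*} [Fintype V] (G : SimpleGraph V) (θ : V → ℕ) : ℕ :=
  sInf {k | ∃ S : Finset V, S.card = k ∧ ∀ v, Activated G θ (↑S) v}

/-- The `n`-cycle on vertices `ZMod n`, with edges between consecutive elements. -/
def cycleGraph (n : ℕ) [NeZero n] : SimpleGraph (ZMod n) :=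
  SimpleGraph.fromRel (fun a b => b = a + 1)

open Finset

section Activation

variable {V : Type*} {G : SimpleGraph V} {θ : V → ℕ} {S : Set V}

theorem Activated.mem_of_closed {A : Set V} (hSA : S ⊆ A)
    (hA : ∀ v (T : Finset V), (∀ u ∈ T, G.Adj u v) → θ v ≤ #T → (∀ u ∈ T, u ∈ A) → v ∈ A)
    {v : V} (hv : Activated G θ S v) : v ∈ A := by
  induction hv with
  | base h => exact hSA h
  | step T hadj hcard _ ih => exact hA _ T hadj hcard ih

theorem Activated.of_adj_of_adj [DecidableEq V] {a b v : V} (hab : a ≠ b) (hθ : θ v ≤ 2)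
    (ha : G.Adj a v) (hb : G.Adj b v) (ha' : Activated G θ S a) (hb' : Activated G θ S b) :
    Activated G θ S v := by
  refine .step {a, b} ?_ (by rwa [card_pair hab]) ?_
  · simp only [mem_insert, mem_singleton]
    rintro u (rfl | rfl) <;> assumption
  · simp only [mem_insert, mem_singleton]
    rintro u (rfl | rfl) <;> assumption

end Activation

theorem card_le_two_mul_card_of_forall_mem_or_add_mem {G : Type*} [AddGroup G] [Fintype G]
    [DecidableEq G] {W : Finset G} (a : G) (h : ∀ v, v ∈ W ∨ v + a ∈ W) :
    Fintype.card G ≤ 2 * #W := by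
  have hcover : (univ : Finset G) ⊆ W ∪ W.image (· - a) := by
    intro v _
    rcases h v with hv | hv
    · exact mem_union_left _ hv
    · exact mem_union_right _ (mem_image.2 ⟨_, hv, add_sub_cancel_right v a⟩)
  calc Fintype.card G = #(univ : Finset G) := rfl
    _ ≤ #(W ∪ W.image (· - a)) := card_le_card hcover
    _ ≤ #W + #(W.image (· - a)) := card_union_le _ _
    _ ≤ 2 * #W := by have := card_image_le (s := W) (f := (· - a)); omega

theorem ZMod.two_ne_zero_of_three_le {n : ℕ} (hn : 3 ≤ n) : (2 : ZMod n) ≠ 0 := by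
  intro h
  have : n ∣ 2 := (ZMod.natCast_eq_zero_iff 2 n).1 (by exact_mod_cast h)
  exact absurd (Nat.le_of_dvd two_pos this) (by omega)

section Cycle

variable {n : ℕ} [NeZero n]

theorem cycleGraph_adj_add_one (hn : 1 < n) (v : ZMod n) : (cycleGraph n).Adj v (v + 1) := by
  have : Fact (1 < n) := ⟨hn⟩
  exact (SimpleGraph.fromRel_adj _ _ _).2 ⟨(add_ne_left.2 one_ne_zero).symm, .inl rfl⟩

theorem cycleGraph_adj_sub_one (hn : 1 < n) (v : ZMod n) : (cycleGraph n).Adj (v - 1) v := by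
  simpa using cycleGraph_adj_add_one hn (v - 1)

theorem cycleGraph_eq_sub_one_or_eq_add_one_of_adj {u v : ZMod n} (h : (cycleGraph n).Adj u v) :
    u = v - 1 ∨ u = v + 1 := by
  rcases ((SimpleGraph.fromRel_adj _ _ _).1 h).2 with rfl | rfl
  · exact .inl (add_sub_cancel_right u 1).symm
  · exact .inr rfl

theorem cycleGraph_sub_one_mem_and_add_one_mem (hn : 3 ≤ n) {v : ZMod n} {T : Finset (ZMod n)}
    (hadj : ∀ u ∈ T, (cycleGraph n).Adj u v) (hcard : 2 ≤ #T) : v - 1 ∈ T ∧ v + 1 ∈ T := by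
  have hne : v - 1 ≠ v + 1 := fun h ↦
    ZMod.two_ne_zero_of_three_le hn (by linear_combination -h)
  have hsub : T ⊆ {v - 1, v + 1} := fun u hu ↦ by
    rcases cycleGraph_eq_sub_one_or_eq_add_one_of_adj (hadj u hu) with rfl | rfl <;> simp
  rw [eq_of_subset_of_card_le hsub (by rw [card_pair hne]; exact hcard)]
  simp

theorem mem_or_add_one_mem_of_forall_activated (hn : 3 ≤ n) {S : Set (ZMod n)}
    (hS : ∀ v, Activated (cycleGraph n) (fun _ ↦ 2) S v) (v : ZMod n) : v ∈ S ∨ v + 1 ∈ S := by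
  by_contra! hvS
  have hclosed : v ∈ ({v, v + 1}ᶜ : Set (ZMod n)) := by
    refine (hS v).mem_of_closed ?_ ?_
    · rintro u hu (rfl | rfl)
      exacts [hvS.1 hu, hvS.2 hu]
    · rintro u T hadj hcard hT (rfl | rfl)
      · exact hT _ (cycleGraph_sub_one_mem_and_add_one_mem hn hadj hcard).2 (.inr rfl)
      · have := (cycleGraph_sub_one_mem_and_add_one_mem hn hadj hcard).1
        rw [add_sub_cancel_right] at this
        exact hT _ this (.inl rfl)
  exact hclosed (.inl rfl)

def evenSeed (n : ℕ) [NeZero n] : Finset (ZMod n) :=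
  (range ((n + 1) / 2)).image fun k ↦ ((2 * k : ℕ) : ZMod n)

theorem card_evenSeed : #(evenSeed n) = (n + 1) / 2 := by
  refine (card_image_of_injOn fun a ha b hb hab ↦ ?_).trans (card_range _)
  simp only [coe_range, Set.mem_Iio] at ha hb
  have := (ZMod.natCast_eq_natCast_iff' _ _ n).1 hab
  rw [Nat.mod_eq_of_lt (by omega), Nat.mod_eq_of_lt (by omega)] at this
  omega

theorem natCast_mem_evenSeed {k : ℕ} (hk : 2 * k < n) : ((2 * k : ℕ) : ZMod n) ∈ evenSeed n :=
  mem_image.2 ⟨k, mem_range.2 (by omega), rfl⟩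

theorem mem_evenSeed_or_neighbours_mem (v : ZMod n) :
    v ∈ evenSeed n ∨ (v - 1 ∈ evenSeed n ∧ v + 1 ∈ evenSeed n) := by
  have hv := ZMod.val_lt v
  rw [← ZMod.natCast_zmod_val v]
  obtain ⟨k, hk | hk⟩ := Nat.even_or_odd' v.val
  · rw [hk]
    exact .inl (natCast_mem_evenSeed (by omega))
  · right
    rw [hk]
    refine ⟨by simpa using natCast_mem_evenSeed (n := n) (k := k) (by omega), ?_⟩
    have hsucc : ((2 * k + 1 : ℕ) : ZMod n) + 1 = ((2 * (k + 1) : ℕ) : ZMod n) := by push_cast; ring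
    rw [hsucc]
    rcases (show 2 * (k + 1) < n ∨ 2 * (k + 1) = n by omega) with hlt | heq
    · exact natCast_mem_evenSeed hlt
    · rw [heq, ZMod.natCast_self]
      simpa using natCast_mem_evenSeed (n := n) (k := 0) (by omega)

theorem activated_evenSeed (hn : 3 ≤ n) (v : ZMod n) :
    Activated (cycleGraph n) (fun _ ↦ 2) (evenSeed n) v := by
  rcases mem_evenSeed_or_neighbours_mem v with hv | ⟨hl, hr⟩
  · exact .base hv
  · refine .of_adj_of_adj (fun h ↦ ZMod.two_ne_zero_of_three_le hn ?_) le_rfl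
      (cycleGraph_adj_sub_one (by omega) v) (cycleGraph_adj_add_one (by omega) v).symm
      (.base hl) (.base hr)
    linear_combination -h

end Cycle

/-- For `n ≥ 3`, `min-seed(C_n, 2) = ⌈n/2⌉`. -/
theorem minSeed_cycleGraph (n : ℕ) [NeZero n] (hn : 3 ≤ n) :
    minSeed (cycleGraph n) (fun _ => 2) = (n + 1) / 2 := by
  have hmem : (n + 1) / 2 ∈ {k | ∃ S : Finset (ZMod n), #S = k ∧
      ∀ v, Activated (cycleGraph n) (fun _ => 2) (↑S) v} :=
    ⟨evenSeed n, card_evenSeed, activated_evenSeed hn⟩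
  refine le_antisymm (Nat.sInf_le hmem) (le_csInf ⟨_, hmem⟩ ?_)
  rintro _ ⟨W, rfl, hW⟩
  have := card_le_two_mul_card_of_forall_mem_or_add_mem 1
    (mem_or_add_one_mem_of_forall_activated hn hW)
  rw [ZMod.card] at this
  omega
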